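/- arXiv:2311.17746 — 7 statements merged into one kernel-verified Lean document; each statement's English description precedes it below -/
import Mathlib

section
/- For v₁, v₂ ∈ M₂(ℤ), both Klein vectors satisfy the intertwining relation a₁·v_i = v_i·a₂ for i = 1, 2, where a₁ = 2·v₁·adj(v₂) − tr(v₁·adj(v₂))·I and a₂ = 2·adj(v₂)·v₁ − tr(adj(v₂)·v₁)·I. -/
open Matrix

theorem klein_vectors_intertwine (v₁ v₂ : Matrix (Fin 2) (Fin 2) ℤ) :
    let a₁ := 2 • (v₁ * Matrix.adjugate v₂) -
      Matrix.trace (v₁ * Matrix.adjugate v₂) • (1 : Matrix (Fin 2) (Fin 2) ℤ)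
    let a₂ := 2 • (Matrix.adjugate v₂ * v₁) -
      Matrix.trace (Matrix.adjugate v₂ * v₁) • (1 : Matrix (Fin 2) (Fin 2) ℤ)
    a₁ * v₁ = v₁ * a₂ ∧ a₁ * v₂ = v₂ * a₂ := by
  intro a₁ a₂
  have htr : Matrix.trace (v₁ * Matrix.adjugate v₂)
      = Matrix.trace (Matrix.adjugate v₂ * v₁) := Matrix.trace_mul_comm _ _
  constructor
  · show a₁ * v₁ = v₁ * a₂
    simp only [a₁, a₂, sub_mul, mul_sub, smul_mul_assoc, mul_smul_comm, one_mul, mul_one,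
      htr, Matrix.mul_assoc]
  · show a₁ * v₂ = v₂ * a₂
    simp only [a₁, a₂, sub_mul, mul_sub, smul_mul_assoc, mul_smul_comm, one_mul, mul_one,
      htr, Matrix.mul_assoc, Matrix.mul_adjugate, Matrix.adjugate_mul]
    rw [← Matrix.mul_assoc, Matrix.mul_adjugate]
    simp [Matrix.smul_mul]
end

section
/- Let a₁, a₂ be traceless 2×2 rational matrices with det(a₁) = det(a₂) ≠ 0. If x, y ∈ M₂(ℚ) satisfy a₁·x = x·a₂ and −a₁·y = y·a₂, then tr(x·adj(y)) = 0, i.e., x and y are orthogonal with respect to the bilinear form Q(x,y) = tr(x·adj(y)). -/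
open Matrix

lemma adj_traceless (a : Matrix (Fin 2) (Fin 2) ℚ) (ht : Matrix.trace a = 0) :
    Matrix.adjugate a = -a := by
  rw [Matrix.trace_fin_two] at ht
  ext i j
  rw [Matrix.adjugate_fin_two]
  fin_cases i <;> fin_cases j <;> simp <;> linarith

theorem orthogonality_of_intertwiners (a₁ a₂ x y : Matrix (Fin 2) (Fin 2) ℚ)
    (ht₁ : Matrix.trace a₁ = 0) (ht₂ : Matrix.trace a₂ = 0)
    (hdet : Matrix.det a₁ = Matrix.det a₂) (hne : Matrix.det a₁ ≠ 0)
    (hx : a₁ * x = x * a₂) (hy : (-a₁) * y = y * a₂) :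
    Matrix.trace (x * Matrix.adjugate y) = 0 := by
  have h1 : Matrix.adjugate a₁ = -a₁ := adj_traceless a₁ ht₁
  have h2 : Matrix.adjugate a₂ = -a₂ := adj_traceless a₂ ht₂
  -- adjugate of hy
  have hadj : Matrix.adjugate y * a₁ = (-a₂) * Matrix.adjugate y := by
    have := congrArg Matrix.adjugate hy
    rw [Matrix.adjugate_mul_distrib, Matrix.adjugate_mul_distrib] at this
    have hna : Matrix.adjugate (-a₁) = a₁ := by
      have : Matrix.trace (-a₁) = 0 := by simp [ht₁]
      rw [adj_traceless (-a₁) this]; simp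
    rw [hna, h2] at this
    exact this
  set z := x * Matrix.adjugate y with hz
  have hanti : a₁ * z = -(z * a₁) := by
    calc a₁ * z = (a₁ * x) * Matrix.adjugate y := by rw [hz, mul_assoc]
    _ = x * (a₂ * Matrix.adjugate y) := by rw [hx, mul_assoc]
    _ = x * (-(Matrix.adjugate y * a₁)) := by rw [hadj]; simp
    _ = -(z * a₁) := by rw [hz]; noncomm_ring
  have hsq : a₁ * a₁ = -(Matrix.det a₁ • (1 : Matrix (Fin 2) (Fin 2) ℚ)) := by
    have hma : a₁ * -a₁ = Matrix.det a₁ • (1 : Matrix (Fin 2) (Fin 2) ℚ) := by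
      rw [← h1]; exact Matrix.mul_adjugate a₁
    rw [show a₁ * a₁ = -(a₁ * -a₁) by noncomm_ring, hma]
  have key : Matrix.trace (a₁ * a₁ * z) = 0 := by
    have e : Matrix.trace (a₁ * (a₁ * z)) = -(Matrix.trace (a₁ * (a₁ * z))) := by
      calc Matrix.trace (a₁ * (a₁ * z)) = Matrix.trace (a₁ * (-(z * a₁))) := by rw [hanti]
      _ = -(Matrix.trace ((a₁ * z) * a₁)) := by rw [mul_neg, Matrix.trace_neg, ← mul_assoc]
      _ = -(Matrix.trace (a₁ * (a₁ * z))) := by rw [Matrix.trace_mul_comm]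
    rw [← mul_assoc] at e
    linarith
  rw [hsq] at key
  simp only [neg_mul, Matrix.smul_mul, one_mul, Matrix.trace_neg, Matrix.trace_smul,
    neg_eq_zero, smul_eq_mul] at key
  rcases mul_eq_zero.mp key with h | h
  · exact absurd h hne
  · exact h
end

section
/- The linear map Φ̃ : Λ²(M₂(ℤ)) → Λ' ⊂ Gross × Gross induced by (v₁, v₂) ↦ (2v₁·adj(v₂) − tr(v₁·adj(v₂))·I, 2·adj(v₂)·v₁ − tr(adj(v₂)·v₁)·I), expressed in suitable bases, has determinant ±2; equivalently its image is an index-2 sublattice of the product of two copies of the Gross lattice. -/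
open Matrix

/-- The pair of Klein vectors associated to a pair of matrices. -/
noncomputable def kleinPair (v₁ v₂ : Matrix (Fin 2) (Fin 2) ℤ) :
    Matrix (Fin 2) (Fin 2) ℤ × Matrix (Fin 2) (Fin 2) ℤ :=
  (2 • (v₁ * Matrix.adjugate v₂) -
      Matrix.trace (v₁ * Matrix.adjugate v₂) • (1 : Matrix (Fin 2) (Fin 2) ℤ),
   2 • (Matrix.adjugate v₂ * v₁) -
      Matrix.trace (Matrix.adjugate v₂ * v₁) • (1 : Matrix (Fin 2) (Fin 2) ℤ))

/-- Membership in the Gross lattice: traceless with even off-diagonal entries. -/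
def InGross (a : Matrix (Fin 2) (Fin 2) ℤ) : Prop :=
  Matrix.trace a = 0 ∧ 2 ∣ a 0 1 ∧ 2 ∣ a 1 0

/-!
Each component of `kleinPair v₁ v₂` has the form `2m - tr(m)·1`, hence is traceless with even
off-diagonal entries, and since `tr(v₁ adj v₂) = tr(adj v₂ v₁)` their sum is twice an integer
matrix; so the image lies in `Λ'`. Conversely, on pairs of elementary matrices `kleinPair` takes the values
`(H, H)`, `(-H, H)`, `(2E₁₂, 0)`, `(2E₂₁, 0)`, `(0, 2E₁₂)`, `(0, 2E₂₁)` with `H = diag(1, -1)`, and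
these span `Λ'`. Inside `Λ × Λ` the lattice `Λ'` is cut out by the single congruence
`(a₁)₀₀ + (a₂)₀₀ ≡ 0 mod 2`, so it has index two, the other coset being that of `(H, 0)`.
-/

local notation "M₂" => Matrix (Fin 2) (Fin 2) ℤ

def grossLattice : Submodule ℤ M₂ where
  carrier := {a | InGross a}
  add_mem' := by
    rintro a b ⟨ha, ha₀₁, ha₁₀⟩ ⟨hb, hb₀₁, hb₁₀⟩
    exact ⟨by rw [trace_add, ha, hb, add_zero], by simpa using dvd_add ha₀₁ hb₀₁,
      by simpa using dvd_add ha₁₀ hb₁₀⟩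
  zero_mem' := by simp [InGross]
  smul_mem' := by
    rintro c a ⟨ha, ha₀₁, ha₁₀⟩
    exact ⟨by rw [trace_smul, ha, smul_zero], by simpa using ha₀₁.mul_left c,
      by simpa using ha₁₀.mul_left c⟩

def evenMatrices : Submodule ℤ M₂ where
  carrier := {m | ∀ i j, 2 ∣ m i j}
  add_mem' hm hn i j := by simpa using dvd_add (hm i j) (hn i j)
  zero_mem' := by simp
  smul_mem' c m hm i j := by simpa using (hm i j).mul_left c

def kleinLattice : Submodule ℤ (M₂ × M₂) :=
  grossLattice.prod grossLattice ⊓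
    evenMatrices.comap (LinearMap.fst ℤ M₂ M₂ + LinearMap.snd ℤ M₂ M₂)

theorem mem_grossLattice {a : M₂} : a ∈ grossLattice ↔ InGross a :=
  Iff.rfl

theorem mem_kleinLattice {p : M₂ × M₂} :
    p ∈ kleinLattice ↔ InGross p.1 ∧ InGross p.2 ∧ ∀ i j, 2 ∣ (p.1 + p.2) i j :=
  and_assoc

theorem inGross_two_smul_sub_trace_smul_one (m : M₂) : InGross (2 • m - trace m • 1) := by
  refine ⟨?_, ?_, ?_⟩
  · rw [trace_sub, trace_smul, trace_smul, trace_one]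
    simp only [Fintype.card_fin, smul_eq_mul, nsmul_eq_mul]
    ring
  all_goals simp only [Matrix.sub_apply, Matrix.smul_apply]
  all_goals simp

theorem kleinPair_mem_kleinLattice (v₁ v₂ : M₂) : kleinPair v₁ v₂ ∈ kleinLattice := by
  refine mem_kleinLattice.2 ⟨inGross_two_smul_sub_trace_smul_one _,
    inGross_two_smul_sub_trace_smul_one _, fun i j => ?_⟩
  have hsum : (kleinPair v₁ v₂).1 + (kleinPair v₁ v₂).2 =
      2 • (v₁ * adjugate v₂ + adjugate v₂ * v₁ - trace (v₁ * adjugate v₂) • 1) := by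
    rw [kleinPair, trace_mul_comm (adjugate v₂) v₁]
    module
  rw [hsum, Matrix.smul_apply]
  exact dvd_mul_right _ _

theorem kleinPair_of (p q r s t u v w : ℤ) :
    kleinPair !![p, q; r, s] !![t, u; v, w] =
      (!![p * w - q * v + r * u - s * t, 2 * (q * t - p * u);
          2 * (r * w - s * v), -(p * w - q * v + r * u - s * t)],
       !![p * w - r * u + q * v - s * t, 2 * (q * w - s * u);
          2 * (r * t - p * v), -(p * w - r * u + q * v - s * t)]) := by
  simp only [kleinPair, adjugate_fin_two_of, mul_fin_two, trace_fin_two_of, one_fin_two, smul_of,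
    smul_cons, smul_empty, of_sub_of, sub_cons, empty_sub_empty, Prod.mk.injEq,
    EmbeddingLike.apply_eq_iff_eq, vecCons_inj, and_true, smul_eq_mul, nsmul_eq_mul, head_cons,
    tail_cons]
  refine ⟨⟨⟨?_, ?_⟩, ?_, ?_⟩, ⟨?_, ?_⟩, ?_, ?_⟩ <;> ring

theorem kleinLattice_le_span :
    kleinLattice ≤ Submodule.span ℤ (Set.range fun p : M₂ × M₂ => kleinPair p.1 p.2) := by
  rintro ⟨a, b⟩ h
  obtain ⟨⟨ha, ⟨β, hβ⟩, ⟨γ, hγ⟩⟩, ⟨hb, ⟨ε, hε⟩, ⟨ζ, hζ⟩⟩, hab⟩ :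
    InGross a ∧ InGross b ∧ ∀ i j, 2 ∣ (a + b) i j := mem_kleinLattice.1 h
  obtain ⟨k, hk⟩ := hab 0 0
  have hmem (v₁ v₂ : M₂) :
      kleinPair v₁ v₂ ∈ Submodule.span ℤ (Set.range fun p : M₂ × M₂ => kleinPair p.1 p.2) :=
    Submodule.subset_span ⟨(v₁, v₂), rfl⟩
  have hdecomp : (a, b) =
      a 0 0 • kleinPair !![1, 0; 0, 0] !![0, 0; 0, 1]
      + (k - a 0 0) •
        (kleinPair !![1, 0; 0, 0] !![0, 0; 0, 1] + kleinPair !![0, 1; 0, 0] !![0, 0; 1, 0])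
      + β • kleinPair !![0, 1; 0, 0] !![1, 0; 0, 0] + γ • kleinPair !![0, 0; 1, 0] !![0, 0; 0, 1]
      + ε • kleinPair !![0, 1; 0, 0] !![0, 0; 0, 1]
      + ζ • kleinPair !![0, 0; 1, 0] !![1, 0; 0, 0] := by
    rw [trace_fin_two] at ha hb
    rw [Matrix.add_apply] at hk
    rw [Prod.ext_iff, ← Matrix.ext_iff, ← Matrix.ext_iff]
    simp only [Fin.forall_fin_two, kleinPair_of, Prod.smul_mk, Prod.mk_add_mk, smul_of, of_add_of,
      smul_cons, smul_empty, add_cons, empty_add_empty, head_cons, tail_cons, of_apply, cons_val',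
      cons_val_zero, cons_val_one, cons_val_fin_one, smul_eq_mul]
    omega
  rw [hdecomp]
  apply_rules [add_mem, Submodule.smul_mem]

theorem span_range_kleinPair :
    Submodule.span ℤ (Set.range fun p : M₂ × M₂ => kleinPair p.1 p.2) = kleinLattice :=
  le_antisymm
    (Submodule.span_le.2 <| Set.range_subset_iff.2 fun p => kleinPair_mem_kleinLattice p.1 p.2)
    kleinLattice_le_span

theorem mem_kleinLattice_iff_two_dvd {p : M₂ × M₂} (h₁ : InGross p.1) (h₂ : InGross p.2) :
    p ∈ kleinLattice ↔ 2 ∣ p.1 0 0 + p.2 0 0 := by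
  refine ⟨fun h => by simpa using (mem_kleinLattice.1 h).2.2 0 0,
    fun h => mem_kleinLattice.2 ⟨h₁, h₂, fun i j => ?_⟩⟩
  obtain ⟨ht₁, h₁₀₁, h₁₁₀⟩ := h₁
  obtain ⟨ht₂, h₂₀₁, h₂₁₀⟩ := h₂
  rw [trace_fin_two] at ht₁ ht₂
  revert i j
  simp only [Fin.forall_fin_two, Matrix.add_apply]
  omega

theorem klein_image_is_index_two_sublattice :
    let S : Submodule ℤ (Matrix (Fin 2) (Fin 2) ℤ × Matrix (Fin 2) (Fin 2) ℤ) :=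
      Submodule.span ℤ
        (Set.range fun p : Matrix (Fin 2) (Fin 2) ℤ × Matrix (Fin 2) (Fin 2) ℤ =>
          kleinPair p.1 p.2)
    -- the image is exactly Λ' = {(a₁,a₂) ∈ Λ×Λ : a₁ + a₂ ∈ 2·M₂(ℤ)}
    ((S : Set (Matrix (Fin 2) (Fin 2) ℤ × Matrix (Fin 2) (Fin 2) ℤ)) =
      {p | InGross p.1 ∧ InGross p.2 ∧ ∀ i j, 2 ∣ (p.1 + p.2) i j}) ∧
    -- and it has index two in Λ×Λ
    ∃ p₀, (InGross p₀.1 ∧ InGross p₀.2) ∧ p₀ ∉ S ∧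
      ∀ p, InGross p.1 ∧ InGross p.2 → (p ∈ S ∨ p - p₀ ∈ S) := by
  intro S
  have hS : S = kleinLattice := span_range_kleinPair
  let H : M₂ := !![1, 0; 0, -1]
  have hH : InGross H := by simp [InGross, H, trace_fin_two_of]
  have h0 : InGross 0 := grossLattice.zero_mem
  refine ⟨hS ▸ Set.ext fun p => mem_kleinLattice, (H, 0), ⟨hH, h0⟩, ?_, ?_⟩
  · rw [hS, mem_kleinLattice_iff_two_dvd hH h0]
    norm_num [H]
  · rintro p ⟨h₁, h₂⟩
    rw [hS, mem_kleinLattice_iff_two_dvd h₁ h₂, mem_kleinLattice_iff_two_dvd (p := p - (H, 0))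
      (mem_grossLattice.1 (sub_mem h₁ hH)) (mem_grossLattice.1 (sub_mem h₂ h0))]
    have hshift : (p - (H, 0)).1 0 0 + (p - (H, 0)).2 0 0 = p.1 0 0 + p.2 0 0 - 1 := by
      simp [H, sub_add_eq_add_sub]
    omega
end

section
/- Let N be an odd positive integer. For a, a' coprime to N with 0 ≤ a, a' < N, the forms Q_{N,a} = a·x² + N·xy and Q_{N,a'} = a'·x² + N·xy are SL₂(ℤ)-equivalent if and only if a ≡ a' (mod N). In particular the forms Q_{N,a} for a running over residues mod N coprime to N are pairwise SL₂(ℤ)-inequivalent. -/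
/-- `SL₂(ℤ)`-equivalence of integral binary quadratic forms given by coefficient
triples `(a, b, c) ↦ ax² + bxy + cy²`, via unimodular substitution of variables. -/
def SL2Equiv (f g : ℤ × ℤ × ℤ) : Prop :=
  ∃ p q r s : ℤ, p * s - q * r = 1 ∧
    ∀ x y : ℤ,
      g.1 * x ^ 2 + g.2.1 * x * y + g.2.2 * y ^ 2 =
        f.1 * (p * x + q * y) ^ 2 + f.2.1 * (p * x + q * y) * (r * x + s * y) +
          f.2.2 * (r * x + s * y) ^ 2

theorem square_disc_uniqueness (N a a' : ℤ) (hNodd : Odd N) (hNpos : 0 < N)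
    (ha : IsCoprime a N) (ha' : IsCoprime a' N)
    (har : 0 ≤ a ∧ a < N) (ha'r : 0 ≤ a' ∧ a' < N) :
    SL2Equiv (a, N, 0) (a', N, 0) ↔ a % N = a' % N := by
  constructor
  · rintro ⟨p, q, r, s, hdet, h⟩
    have e1 : a' = a * p ^ 2 + N * (p * r) := by linear_combination h 1 0
    have e2 : q * (a * q + N * s) = 0 := by linear_combination -(h 0 1)
    have e3 : a' + N = a * (p + q) ^ 2 + N * ((p + q) * (r + s)) := by
      linear_combination h 1 1
    by_cases hq : q = 0
    · subst hq
      have hps : p * s = 1 := by linarith [hdet]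
      have hp : p = 1 ∨ p = -1 := Int.eq_one_or_neg_one_of_mul_eq_one hps
      have hp2 : p ^ 2 = 1 := by rcases hp with hp | hp <;> subst hp <;> norm_num
      have hd : N ∣ (a' - a) := ⟨p * r, by rw [hp2] at e1; linarith⟩
      have : a' - a = 0 := Int.eq_zero_of_abs_lt_dvd hd (by rw [abs_lt]; omega)
      rw [Int.emod_eq_of_lt har.1 har.2, Int.emod_eq_of_lt ha'r.1 ha'r.2]
      omega
    · exfalso
      have hl : a * q + N * s = 0 := (mul_eq_zero.mp e2).resolve_left hq
      have key : 2 * q * (a * p + N * r) = 0 := by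
        linear_combination e1 - e3 + e2 - N * hdet - 2 * q * hl
      have h0 : a * p + N * r = 0 := by
        rcases mul_eq_zero.mp key with h' | h'
        · exact absurd (by omega : q = 0) hq
        · exact h'
      have haq : N ∣ a * q := ⟨-s, by linarith⟩
      obtain ⟨u, hu⟩ := ha.symm.dvd_of_dvd_mul_left haq
      have hN : (N : ℤ) ≠ 0 := by omega
      have hs : s = -(a * u) := by
        have h2 : N * (a * u + s) = 0 := by rw [hu] at hl; linarith
        have := (mul_eq_zero.mp h2).resolve_left hN
        linarith
      have : (0 : ℤ) = 1 := by
        rw [hu, hs] at hdet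
        linear_combination hdet + u * h0
      norm_num at this
  · intro hmod
    rw [Int.emod_eq_of_lt har.1 har.2, Int.emod_eq_of_lt ha'r.1 ha'r.2] at hmod
    have haa : a = a' := hmod
    subst haa
    exact ⟨1, 0, 0, 1, by norm_num, fun x y => by ring⟩
end

section
/- Let N be an odd positive integer and a₁, a₂ integers coprime to N. The Dirichlet composition of the concordant forms a₁x² + Nxy and a₂x² + Nxy is a₁a₂·x² + Nxy. Hence the map a mod N ↦ [a·x² + N·xy] from (ℤ/Nℤ)ˣ to SL₂(ℤ)-classes of primitive forms of discriminant N² is a group homomorphism with respect to Dirichlet composition. -/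
/-- Dirichlet composition of concordant forms, as a coefficient triple. -/
def dirichletComp (a₁ a₂ b D : ℤ) : ℤ × ℤ × ℤ :=
  (a₁ * a₂, b, (b ^ 2 - D) / (4 * (a₁ * a₂)))

theorem square_disc_composition (N a₁ a₂ : ℤ) (hNodd : Odd N) (hNpos : 0 < N)
    (h₁ : IsCoprime a₁ N) (h₂ : IsCoprime a₂ N) (hcop : IsCoprime a₁ a₂) (hne : a₁ * a₂ ≠ 0) :
    dirichletComp a₁ a₂ N (N ^ 2) = (a₁ * a₂, N, 0) ∧
      SL2Equiv (a₁ * a₂, N, 0) (a₁ * a₂ % N, N, 0) := by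
  constructor
  · simp [dirichletComp]
  · refine ⟨1, 0, -(a₁ * a₂ / N), 1, by ring, fun x y => ?_⟩
    have h := Int.emod_def (a₁ * a₂) N
    simp only
    rw [h]
    ring
end

section
/- Let a, c be integers with a > 1, c > 1, a ≠ c, and D = 1 − 4ac < 0. Then the form q = a²x² + (1−2ac)xy + c²y² of discriminant D is not SL₂(ℤ)-equivalent to the principal form x² + xy + ac·y². -/
theorem square_class_nontrivial (a c : ℤ) (ha : 1 < a) (hc : 1 < c) (hac : a ≠ c) :
    ¬ SL2Equiv (a ^ 2, 1 - 2 * a * c, c ^ 2) (1, 1, a * c) := by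
  rintro ⟨p, q, r, s, hdet, heq⟩
  have h1 := heq s (-r)
  have h2 := heq (-q) p
  simp only at h1 h2
  have e1 : p * s + q * (-r) = 1 := by linarith
  have e0 : r * s + s * (-r) = 0 := by ring
  have e2 : p * (-q) + q * p = 0 := by ring
  have e3 : r * (-q) + s * p = 1 := by linarith
  rw [e1, e0] at h1
  rw [e2, e3] at h2
  have h1' : s ^ 2 - s * r + a * c * r ^ 2 = a ^ 2 := by linear_combination h1
  have h2' : q ^ 2 - q * p + a * c * p ^ 2 = c ^ 2 := by linear_combination h2
  rcases lt_or_gt_of_ne hac with h | h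
  · -- a < c : use representation of a²
    rcases eq_or_ne r 0 with hr | hr
    · subst hr
      have hps : p * s = 1 := by linarith
      have hs : s = 1 ∨ s = -1 := (Int.mul_eq_one_iff_eq_one_or_neg_one.mp hps).imp
        (fun h => h.2) (fun h => h.2)
      rcases hs with hs | hs <;> subst hs <;> nlinarith [h1']
    · have habs : 1 ≤ |r| := Int.one_le_abs hr
      have hr2 : 1 ≤ r ^ 2 := by nlinarith [sq_abs r]
      nlinarith [sq_nonneg (2*s - r), h1',
        mul_nonneg (by linarith : (0:ℤ) ≤ r^2 - 1) (by nlinarith : (0:ℤ) ≤ 4*a*c - 1),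
        mul_nonneg (by linarith : (0:ℤ) ≤ a) (by linarith : (0:ℤ) ≤ c - a - 1)]
  · rcases eq_or_ne p 0 with hp | hp
    · subst hp
      have hqr : q * r = -1 := by linarith
      have hq : q = 1 ∨ q = -1 := by
        rcases Int.isUnit_iff.mp (IsUnit.of_mul_eq_one (a := q) (-r) (by linarith)) with h' | h'
        · exact Or.inl h'
        · exact Or.inr h'
      rcases hq with hq | hq <;> subst hq <;> nlinarith [h2']
    · have habs : 1 ≤ |p| := Int.one_le_abs hp
      have hp2 : 1 ≤ p ^ 2 := by nlinarith [sq_abs p]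
      nlinarith [sq_nonneg (2*q - p), h2',
        mul_nonneg (by linarith : (0:ℤ) ≤ p^2 - 1) (by nlinarith : (0:ℤ) ≤ 4*a*c - 1),
        mul_nonneg (by linarith : (0:ℤ) ≤ c) (by linarith : (0:ℤ) ≤ a - c - 1)]
end

section
/- Let q₁ = α₁x² + βxy + γ₁y² and q₂ = α₂x² + βxy + γ₂y² be integral binary quadratic forms of the same discriminant with gcd(α₁, α₂) = 1 and α₁α₂ ≠ 0 (so α₁γ₁ = α₂γ₂, α₁ ∣ γ₂, α₂ ∣ γ₁). Then v₁ = (α₁, 0; β, α₂) and v₂ = (0, −1; γ₂/α₁, 0) span a rank-2 submodule of M₂(ℤ) contained in {x ∈ M₂(ℤ) : A₁·x = x·A₂}, where A₁ = (−β, 2α₁; −2γ₁, β) and A₂ = (β, 2α₂; −2γ₂, −β), and det(x·v₁ + y·v₂) = α₁α₂·x² + β·xy + ((β² − D)/(4α₁α₂))·y², the Dirichlet composition of q₁ and q₂. -/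
open Matrix

theorem dirichlet_composition_via_plane (α₁ α₂ β γ₁ γ₂ D : ℤ)
    (h₁ : β ^ 2 - 4 * α₁ * γ₁ = D) (h₂ : β ^ 2 - 4 * α₂ * γ₂ = D)
    (hcop : IsCoprime α₁ α₂) (hne : α₁ * α₂ ≠ 0) :
    let A₁ : Matrix (Fin 2) (Fin 2) ℤ := !![-β, 2 * α₁; -2 * γ₁, β]
    let A₂ : Matrix (Fin 2) (Fin 2) ℤ := !![β, 2 * α₂; -2 * γ₂, -β]
    let v₁ : Matrix (Fin 2) (Fin 2) ℤ := !![α₁, 0; β, α₂]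
    let v₂ : Matrix (Fin 2) (Fin 2) ℤ := !![0, -1; γ₂ / α₁, 0]
    A₁ * v₁ = v₁ * A₂ ∧ A₁ * v₂ = v₂ * A₂ ∧
    ∀ x y : ℤ, Matrix.det (x • v₁ + y • v₂) =
      α₁ * α₂ * x ^ 2 + β * x * y + ((β ^ 2 - D) / (4 * (α₁ * α₂))) * y ^ 2 := by
  intro A₁ A₂ v₁ v₂
  have ha1 : α₁ ≠ 0 := fun h => hne (by simp [h])
  have ha2 : α₂ ≠ 0 := fun h => hne (by simp [h])
  have hprod : α₁ * γ₁ = α₂ * γ₂ := by linarith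
  have hdvd : α₁ ∣ γ₂ := by
    have : α₁ ∣ α₂ * γ₂ := ⟨γ₁, hprod.symm⟩
    exact (IsCoprime.dvd_of_dvd_mul_left hcop this)
  obtain ⟨c, hc⟩ := hdvd
  have hγ₁ : γ₁ = α₂ * c := by
    have : α₁ * γ₁ = α₁ * (α₂ * c) := by rw [hprod, hc]; ring
    exact mul_left_cancel₀ ha1 this
  have hdiv : γ₂ / α₁ = c := by rw [hc]; exact Int.mul_ediv_cancel_left _ ha1
  have hdiv2 : (β ^ 2 - D) / (4 * (α₁ * α₂)) = c := by
    have : β ^ 2 - D = 4 * (α₁ * α₂) * c := by rw [← h₁, hγ₁]; ring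
    rw [this]
    exact Int.mul_ediv_cancel_left _ (by simpa using hne)
  refine ⟨?_, ?_, ?_⟩
  · ext i j
    fin_cases i <;> fin_cases j <;>
      simp [A₁, A₂, v₁, v₂, Matrix.mul_apply, Fin.sum_univ_two, hγ₁, hc] <;> ring
  · ext i j
    fin_cases i <;> fin_cases j <;>
      simp [A₁, A₂, v₁, v₂, Matrix.mul_apply, Fin.sum_univ_two, hdiv, hγ₁, hc, Int.mul_ediv_cancel_left _ ha1, Int.mul_ediv_cancel _ ha1] <;> ring
  · intro x y
    rw [hdiv2]
    simp [v₁, v₂, Matrix.det_fin_two, hdiv]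
    ring
end
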